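/- arXiv:2205.12172 — 4 statements merged into one kernel-verified Lean document; each statement's English description precedes it below -/
import Mathlib

section
/- Let (X,d) be a metric space, τ > 0, and let F : X → ℝ be bounded from below. Let (u_k)_{k∈ℕ} be a minimizing movement sequence for F with step size τ, i.e. for every k and every u ∈ X: F(u_{k+1}) + d(u_{k+1}, u_k)²/(2τ) ≤ F(u) + d(u, u_k)²/(2τ). Then for all natural numbers l ≤ k: d(u_l, u_k)² ≤ 2τ (k − l) ( F(u₀) − ⨅_{n∈ℕ} F(u_n) ). -/
/-!
Testing the minimality of `u (k + 1)` against the competitor `u k` gives the energy dissipation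
`d(u_k, u_{k+1})² ≤ 2τ (F(u_k) − F(u_{k+1}))`; in particular `F ∘ u` is nonincreasing.
Between `u_l` and `u_k` the triangle inequality and Cauchy–Schwarz bound `d(u_l, u_k)²` by
`(k − l)` times the sum of the squared step lengths, which telescopes against the dissipation.
-/

open Finset

section DiscreteHoelder

variable {X : Type*} [PseudoMetricSpace X]

theorem dist_sq_le_mul_sum_dist_sq (f : ℕ → X) (m : ℕ) :
    dist (f 0) (f m) ^ 2 ≤ m * ∑ i ∈ range m, dist (f i) (f (i + 1)) ^ 2 :=
  calc dist (f 0) (f m) ^ 2 ≤ (∑ i ∈ range m, dist (f i) (f (i + 1))) ^ 2 :=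
        pow_le_pow_left₀ dist_nonneg (dist_le_range_sum_dist f m) 2
    _ ≤ m * ∑ i ∈ range m, dist (f i) (f (i + 1)) ^ 2 := by
        simpa using sq_sum_le_card_mul_sum_sq (s := range m) (f := fun i => dist (f i) (f (i + 1)))

theorem dist_sq_le_mul_sub_of_dist_sq_le_sub (f : ℕ → X) (a : ℕ → ℝ)
    (h : ∀ i, dist (f i) (f (i + 1)) ^ 2 ≤ a i - a (i + 1)) (l m : ℕ) :
    dist (f l) (f (l + m)) ^ 2 ≤ m * (a l - a (l + m)) := by
  have htelescope : ∑ i ∈ range m, (a (l + i) - a (l + i + 1)) = a l - a (l + m) := by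
    simpa [add_assoc] using sum_range_sub' (fun i => a (l + i)) m
  calc dist (f l) (f (l + m)) ^ 2
      ≤ m * ∑ i ∈ range m, dist (f (l + i)) (f (l + i + 1)) ^ 2 :=
        dist_sq_le_mul_sum_dist_sq (fun i => f (l + i)) m
    _ ≤ m * ∑ i ∈ range m, (a (l + i) - a (l + i + 1)) := by
        gcongr with i
        exact h (l + i)
    _ = m * (a l - a (l + m)) := by rw [htelescope]

theorem dist_sq_le_of_minimizing_step {F : X → ℝ} {τ : ℝ} (hτ : 0 < τ) {x y : X}
    (hy : F y + dist y x ^ 2 / (2 * τ) ≤ F x + dist x x ^ 2 / (2 * τ)) :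
    dist x y ^ 2 ≤ 2 * τ * F x - 2 * τ * F y := by
  rw [dist_self, dist_comm] at hy
  have hdiv : dist x y ^ 2 / (2 * τ) ≤ F x - F y := by linarith [zero_div (2 * τ)]
  rw [div_le_iff₀ (by positivity)] at hdiv
  linarith

end DiscreteHoelder

/-- Discrete Hölder-type estimate for a minimizing movement sequence. -/
theorem minimizing_movement_discrete_hoelder {X : Type*} [MetricSpace X]
    (τ : ℝ) (hτ : 0 < τ) (F : X → ℝ) (hF : BddBelow (Set.range F)) (u : ℕ → X)
    (hmin : ∀ k, ∀ v, F (u (k + 1)) + dist (u (k + 1)) (u k) ^ 2 / (2 * τ)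
      ≤ F v + dist v (u k) ^ 2 / (2 * τ)) :
    ∀ l k : ℕ, l ≤ k →
      dist (u l) (u k) ^ 2 ≤ 2 * τ * ((k : ℝ) - (l : ℝ)) * (F (u 0) - ⨅ n : ℕ, F (u n)) := by
  have hstep : ∀ i, dist (u i) (u (i + 1)) ^ 2 ≤ 2 * τ * F (u i) - 2 * τ * F (u (i + 1)) :=
    fun i => dist_sq_le_of_minimizing_step hτ (hmin i (u i))
  have hanti : Antitone (F ∘ u) := antitone_nat_of_succ_le fun i => by
    have := (sq_nonneg _).trans (hstep i)
    rw [← mul_sub, mul_nonneg_iff_of_pos_left (by positivity)] at this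
    exact sub_nonneg.1 this
  have hbdd : BddBelow (Set.range (F ∘ u)) := hF.mono (Set.range_comp_subset_range u F)
  intro l k hlk
  obtain ⟨m, rfl⟩ := Nat.exists_eq_add_of_le hlk
  have hcast : ((l + m : ℕ) : ℝ) - l = m := by push_cast; ring
  rw [hcast]
  calc dist (u l) (u (l + m)) ^ 2 ≤ m * (2 * τ * F (u l) - 2 * τ * F (u (l + m))) :=
        dist_sq_le_mul_sub_of_dist_sq_le_sub u (fun i => 2 * τ * F (u i)) hstep l m
    _ = 2 * τ * m * (F (u l) - F (u (l + m))) := by ring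
    _ ≤ 2 * τ * m * (F (u 0) - ⨅ n : ℕ, F (u n)) := by
        gcongr 2 * τ * m * (?_ - ?_)
        · exact hanti (Nat.zero_le l)
        · exact ciInf_le hbdd (l + m)
end

section
/- Let (X,d) be a metric space, τ > 0, and let F : X → ℝ be bounded from below. Let (u_k)_{k∈ℕ} be a minimizing movement sequence for F with step size τ, i.e. for every k and every u ∈ X: F(u_{k+1}) + d(u_{k+1}, u_k)²/(2τ) ≤ F(u) + d(u, u_k)²/(2τ). Let γ : [0,∞) → X be an interpolating curve that is constant-speed on each time interval, i.e. for every k ∈ ℕ and all s, t ∈ [kτ, (k+1)τ]: d(γ(s), γ(t)) = (|t − s|/τ) · d(u_k, u_{k+1}) (in particular γ(kτ) = u_k). Then for all 0 ≤ s ≤ t: d(γ(s), γ(t))² ≤ 6 ( F(u₀) − ⨅_{n∈ℕ} F(u_n) ) (t − s). -/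
/-!
A step of the scheme, compared with staying at `u k`, pays
`d(u k, u (k+1))² ≤ 2τ (F (u k) - F (u (k+1)))`. On one time interval the constant speed turns this
into `d(γ s, γ t)² ≤ (t - s) · 2 (F (u k) - F (u (k+1)))`, and by Cauchy–Schwarz bounds of the form
`d² ≤ (time) · (energy)` add up across grid points, the energy drops telescoping to at most
`F (u 0) - inf F (u n)`. This even gives the constant `2` in place of `6`.
-/

open Set

section

variable {X : Type*} [MetricSpace X]

lemma dist_sq_le_of_forall_le_add_dist_sq {F : X → ℝ} {τ : ℝ} (hτ : 0 < τ) {x y : X}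
    (hy : ∀ v, F y + dist y x ^ 2 / (2 * τ) ≤ F v + dist v x ^ 2 / (2 * τ)) :
    dist x y ^ 2 ≤ 2 * τ * (F x - F y) := by
  have h := hy x
  rw [dist_self, dist_comm, zero_pow two_ne_zero, zero_div, add_zero] at h
  have h' : dist x y ^ 2 / (2 * τ) ≤ F x - F y := by linarith
  rwa [div_le_iff₀ (by positivity), mul_comm] at h'

lemma dist_sq_le_add_mul_add {x y z : X} {a b A B : ℝ} (ha : 0 ≤ a) (hb : 0 ≤ b)
    (hA : 0 ≤ A) (hB : 0 ≤ B) (hxy : dist x y ^ 2 ≤ a * A) (hyz : dist y z ^ 2 ≤ b * B) :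
    dist x z ^ 2 ≤ (a + b) * (A + B) := by
  have hpq : dist x y * dist y z ≤ (a * B + b * A) / 2 := by
    refine (pow_le_pow_iff_left₀ (by positivity) (by positivity) two_ne_zero).1 ?_
    calc (dist x y * dist y z) ^ 2 = dist x y ^ 2 * dist y z ^ 2 := mul_pow _ _ _
      _ ≤ (a * A) * (b * B) := mul_le_mul hxy hyz (sq_nonneg _) (by positivity)
      _ ≤ ((a * B + b * A) / 2) ^ 2 := by nlinarith [sq_nonneg (a * B - b * A)]
  calc dist x z ^ 2 ≤ (dist x y + dist y z) ^ 2 := by gcongr; exact dist_triangle x y z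
    _ ≤ (a + b) * (A + B) := by nlinarith

lemma dist_sq_le_mul_of_cellwise {γ : ℝ → X} {τ : ℝ} (hτ : 0 ≤ τ) {E : ℕ → ℝ} (hE : Antitone E)
    (hcell : ∀ k : ℕ, ∀ s t, s ∈ Icc ((k : ℝ) * τ) ((k + 1 : ℝ) * τ) →
      t ∈ Icc ((k : ℝ) * τ) ((k + 1 : ℝ) * τ) → s ≤ t →
      dist (γ s) (γ t) ^ 2 ≤ (t - s) * (E k - E (k + 1)))
    {m n : ℕ} (hmn : m ≤ n) {s t : ℝ} (hs : s ∈ Icc ((m : ℝ) * τ) ((m + 1 : ℝ) * τ))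
    (ht : t ∈ Icc ((n : ℝ) * τ) ((n + 1 : ℝ) * τ)) (hst : s ≤ t) :
    dist (γ s) (γ t) ^ 2 ≤ (t - s) * (E m - E (n + 1)) := by
  induction n, hmn using Nat.le_induction generalizing t with
  | base => exact hcell m s t hs ht hst
  | succ n hmn ih =>
    push_cast at ht ⊢
    set c : ℝ := ((n : ℝ) + 1) * τ
    have hsc : s ≤ c := hs.2.trans (by simp only [c]; gcongr)
    have hleft : dist (γ s) (γ c) ^ 2 ≤ (c - s) * (E m - E (n + 1)) :=
      ih ⟨by nlinarith, le_rfl⟩ hsc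
    have hright : dist (γ c) (γ t) ^ 2 ≤ (t - c) * (E (n + 1) - E (n + 1 + 1)) :=
      hcell (n + 1) c t (by push_cast; exact ⟨le_rfl, by nlinarith⟩) (by push_cast; exact ht)
        ht.1
    calc dist (γ s) (γ t) ^ 2
        ≤ (c - s + (t - c)) * (E m - E (n + 1) + (E (n + 1) - E (n + 1 + 1))) :=
          dist_sq_le_add_mul_add (by linarith) (by linarith [ht.1])
            (sub_nonneg.2 (hE (by omega))) (sub_nonneg.2 (hE (by omega))) hleft hright
      _ = (t - s) * (E m - E (n + 1 + 1)) := by ring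

lemma mem_Icc_floor_div_mul {τ s : ℝ} (hτ : 0 < τ) (hs : 0 ≤ s) :
    s ∈ Icc ((⌊s / τ⌋₊ : ℝ) * τ) ((⌊s / τ⌋₊ + 1 : ℝ) * τ) := by
  constructor
  · exact (le_div_iff₀ hτ).1 (Nat.floor_le (div_nonneg hs hτ.le))
  · exact ((div_le_iff₀ hτ).1 (Nat.lt_floor_add_one (s / τ)).le)

lemma dist_sq_le_mul_energy_drop {F : X → ℝ} {τ : ℝ} (hτ : 0 < τ) {u : ℕ → X} {γ : ℝ → X}
    (hmin : ∀ k, ∀ v, F (u (k + 1)) + dist (u (k + 1)) (u k) ^ 2 / (2 * τ)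
      ≤ F v + dist v (u k) ^ 2 / (2 * τ))
    (hspeed : ∀ k : ℕ, ∀ s t : ℝ, s ∈ Icc ((k : ℝ) * τ) ((k + 1 : ℝ) * τ) →
      t ∈ Icc ((k : ℝ) * τ) ((k + 1 : ℝ) * τ) →
      dist (γ s) (γ t) = (|t - s| / τ) * dist (u k) (u (k + 1)))
    (k : ℕ) (s t : ℝ) (hs : s ∈ Icc ((k : ℝ) * τ) ((k + 1 : ℝ) * τ))
    (ht : t ∈ Icc ((k : ℝ) * τ) ((k + 1 : ℝ) * τ)) (hst : s ≤ t) :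
    dist (γ s) (γ t) ^ 2 ≤ (t - s) * (2 * F (u k) - 2 * F (u (k + 1))) := by
  have hstep := dist_sq_le_of_forall_le_add_dist_sq hτ (hmin k)
  have hts : (t - s) / τ ≤ 1 := (div_le_one hτ).2 (by linarith [hs.1, ht.2])
  have hstep' : dist (u k) (u (k + 1)) ^ 2 / τ ≤ 2 * F (u k) - 2 * F (u (k + 1)) := by
    rw [div_le_iff₀ hτ]; linarith
  rw [hspeed k s t hs ht, abs_of_nonneg (sub_nonneg.2 hst)]
  calc ((t - s) / τ * dist (u k) (u (k + 1))) ^ 2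
      = (t - s) / τ * ((t - s) * (dist (u k) (u (k + 1)) ^ 2 / τ)) := by ring
    _ ≤ 1 * ((t - s) * (2 * F (u k) - 2 * F (u (k + 1)))) := by
      have := sub_nonneg.2 hst
      gcongr
    _ = (t - s) * (2 * F (u k) - 2 * F (u (k + 1))) := one_mul _

end

theorem minimizing_movement_hoelder_interpolation_general {X : Type*} [MetricSpace X]
    (τ : ℝ) (hτ : 0 < τ) (F : X → ℝ) (hF : BddBelow (Set.range F)) (u : ℕ → X)
    (hmin : ∀ k, ∀ v, F (u (k + 1)) + dist (u (k + 1)) (u k) ^ 2 / (2 * τ)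
      ≤ F v + dist v (u k) ^ 2 / (2 * τ))
    (γ : ℝ → X)
    (hspeed : ∀ k : ℕ, ∀ s t : ℝ, s ∈ Set.Icc ((k : ℝ) * τ) ((k + 1 : ℝ) * τ) →
      t ∈ Set.Icc ((k : ℝ) * τ) ((k + 1 : ℝ) * τ) →
      dist (γ s) (γ t) = (|t - s| / τ) * dist (u k) (u (k + 1))) :
    ∀ s t : ℝ, 0 ≤ s → s ≤ t →
      dist (γ s) (γ t) ^ 2 ≤ 6 * (F (u 0) - ⨅ n : ℕ, F (u n)) * (t - s) := by
  intro s t hs hst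
  have hanti : Antitone (fun k => F (u k)) := antitone_nat_of_succ_le fun k => by
    nlinarith [dist_sq_le_of_forall_le_add_dist_sq hτ (hmin k)]
  have hinf : ∀ n, ⨅ n : ℕ, F (u n) ≤ F (u n) :=
    ciInf_le (hF.mono (Set.range_comp_subset_range u F))
  have hchain := dist_sq_le_mul_of_cellwise (E := fun k => 2 * F (u k)) hτ.le
    (hanti.const_mul zero_le_two) (dist_sq_le_mul_energy_drop hτ hmin hspeed)
    (Nat.floor_mono (div_le_div_of_nonneg_right hst hτ.le)) (mem_Icc_floor_div_mul hτ hs)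
    (mem_Icc_floor_div_mul hτ (hs.trans hst)) hst
  have hdrop : F (u ⌊s / τ⌋₊) - F (u (⌊t / τ⌋₊ + 1)) ≤ F (u 0) - ⨅ n : ℕ, F (u n) := by
    linarith [hanti (Nat.zero_le ⌊s / τ⌋₊), hinf (⌊t / τ⌋₊ + 1)]
  nlinarith [hinf 0, sub_nonneg.2 hst]

/-- Uniform (1/2)-Hölder estimate for the constant-speed interpolation of a
minimizing movement sequence. -/
theorem minimizing_movement_hoelder_interpolation {X : Type*} [MetricSpace X]
    (τ : ℝ) (hτ : 0 < τ) (F : X → ℝ) (hF : BddBelow (Set.range F)) (u : ℕ → X)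
    (hmin : ∀ k, ∀ v, F (u (k + 1)) + dist (u (k + 1)) (u k) ^ 2 / (2 * τ)
      ≤ F v + dist v (u k) ^ 2 / (2 * τ))
    (γ : ℝ → X)
    (hγ : ∀ k : ℕ, γ (k * τ) = u k)
    (hspeed : ∀ k : ℕ, ∀ s t : ℝ, s ∈ Set.Icc ((k : ℝ) * τ) ((k + 1 : ℝ) * τ) →
      t ∈ Set.Icc ((k : ℝ) * τ) ((k + 1 : ℝ) * τ) →
      dist (γ s) (γ t) = (|t - s| / τ) * dist (u k) (u (k + 1))) :
    ∀ s t : ℝ, 0 ≤ s → s ≤ t →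
      dist (γ s) (γ t) ^ 2 ≤ 6 * (F (u 0) - ⨅ n : ℕ, F (u n)) * (t - s) :=
  minimizing_movement_hoelder_interpolation_general τ hτ F hF u hmin γ hspeed
end

section
/- Let (X, d_S) and (Y, d_D) be metric spaces, let τ > 0, θ > 0, δ ≥ 0, L ≥ 0, let F : X → ℝ, and let B : X → Y satisfy d_D(B(x), B(x')) ≤ L · d_S(x, x') for all x, x' ∈ X. Fix u_k ∈ X and v ∈ Y, and suppose u_{k+1} ∈ X minimizes the functional u ↦ F(u) + (1/(2τ)) ( d_S(u, u_k)² + d_D(B(u), v)²/θ ) over X, and that d_D(B(u_{k+1}), v) ≤ δ. Then F(u_{k+1}) + (1/(2τ)) (1 − 2L²/θ) d_S(u_k, u_{k+1})² ≤ F(u_k) + δ²/(2θτ). -/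
/-! Test the minimality of `u_{k+1}` against the competitor `u = u_k`. The only term on the
right that is not already controlled is the data misfit `d_D(B u_k, v)²`; the triangle inequality
through `B u_{k+1}` and the Lipschitz bound on `B` give
`d_D(B u_k, v)² ≤ 2 L² d_S(u_k, u_{k+1})² + 2 δ²`, and moving the `L²` term to the left
is what produces the factor `1 - 2 L² / θ`. -/

theorem sq_dist_le_two_mul_add {α : Type*} [PseudoMetricSpace α] (x y z : α) :
    dist x z ^ 2 ≤ 2 * dist x y ^ 2 + 2 * dist y z ^ 2 :=
  calc dist x z ^ 2 ≤ (dist x y + dist y z) ^ 2 :=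
        pow_le_pow_left₀ dist_nonneg (dist_triangle x y z) 2
    _ ≤ 2 * dist x y ^ 2 + 2 * dist y z ^ 2 := by
        linarith [add_sq_le (a := dist x y) (b := dist y z)]

theorem sq_dist_comp_le_of_dist_le_mul {X Y : Type*} [PseudoMetricSpace X]
    [PseudoMetricSpace Y] {B : X → Y} {L : ℝ}
    (hB : ∀ x x' : X, dist (B x) (B x') ≤ L * dist x x')
    (x y : X) (v : Y) :
    dist (B x) v ^ 2 ≤ 2 * L ^ 2 * dist x y ^ 2 + 2 * dist (B y) v ^ 2 := by
  have hLip : dist (B x) (B y) ^ 2 ≤ L ^ 2 * dist x y ^ 2 := by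
    rw [← mul_pow]
    exact pow_le_pow_left₀ dist_nonneg (hB x y) 2
  linarith [sq_dist_le_two_mul_add (B x) (B y) v]

theorem daJKO_energy_estimate_general {X Y : Type*} [MetricSpace X] [MetricSpace Y]
    (τ θ δ L : ℝ) (hτ : 0 < τ) (hθ : 0 < θ)
    (F : X → ℝ) (B : X → Y)
    (hB : ∀ x x' : X, dist (B x) (B x') ≤ L * dist x x')
    (uk : X) (v : Y) (uk1 : X)
    (hmin : ∀ u : X,
      F uk1 + 1 / (2 * τ) * (dist uk1 uk ^ 2 + dist (B uk1) v ^ 2 / θ)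
        ≤ F u + 1 / (2 * τ) * (dist u uk ^ 2 + dist (B u) v ^ 2 / θ))
    (hdata : dist (B uk1) v ≤ δ) :
    F uk1 + 1 / (2 * τ) * (1 - 2 * L ^ 2 / θ) * dist uk uk1 ^ 2
      ≤ F uk + δ ^ 2 / (2 * θ * τ) := by
  have htest := hmin uk
  rw [dist_self, dist_comm uk1 uk] at htest
  have hmisfit := sq_dist_comp_le_of_dist_le_mul hB uk uk1 v
  have hdata_sq : dist (B uk1) v ^ 2 ≤ δ ^ 2 := pow_le_pow_left₀ dist_nonneg hdata 2
  linear_combination htest + 1 / (2 * τ * θ) * hmisfit + 1 / (2 * τ * θ) * hdata_sq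

/-- Perturbed energy estimate for one step of the data-driven minimizing
movement (daJKO) scheme. -/
theorem daJKO_energy_estimate {X Y : Type*} [MetricSpace X] [MetricSpace Y]
    (τ θ δ L : ℝ) (hτ : 0 < τ) (hθ : 0 < θ) (hδ : 0 ≤ δ) (hL : 0 ≤ L)
    (F : X → ℝ) (B : X → Y)
    (hB : ∀ x x' : X, dist (B x) (B x') ≤ L * dist x x')
    (uk : X) (v : Y) (uk1 : X)
    (hmin : ∀ u : X,
      F uk1 + 1 / (2 * τ) * (dist uk1 uk ^ 2 + dist (B uk1) v ^ 2 / θ)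
        ≤ F u + 1 / (2 * τ) * (dist u uk ^ 2 + dist (B u) v ^ 2 / θ))
    (hdata : dist (B uk1) v ≤ δ) :
    F uk1 + 1 / (2 * τ) * (1 - 2 * L ^ 2 / θ) * dist uk uk1 ^ 2
      ≤ F uk + δ ^ 2 / (2 * θ * τ) :=
  daJKO_energy_estimate_general τ θ δ L hτ hθ F B hB uk v uk1 hmin hdata
end

section
/- Let d ≥ 1, λ > 0, ρ ∈ ℝ, m ∈ ℝ^d, and suppose ρ* > 0 satisfies (ρ* − ρ)(ρ* + λ)² = (λ/2)‖m‖². Define m* := (ρ*/(ρ* + λ)) m ∈ ℝ^d. Then (ρ*, m*) is a critical point of the function Ψ(r, w) = ‖w‖²/(2r) + (1/(2λ))( ‖w − m‖² + (r − ρ)² ) on the region r > 0; explicitly, −‖m*‖²/(2 ρ*²) + (ρ* − ρ)/λ = 0 and (1/ρ*) m* + (1/λ)(m* − m) = 0. -/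
/-- The pair `(ρ*, m*)` with `ρ*` the positive root of the cubic
`(x − ρ)(x + λ)² − (λ/2)‖m‖²` and `m* = ρ* m/(ρ* + λ)` satisfies the
first-order optimality conditions of the proximal problem for the
Benamou–Brenier action integrand on the region `r > 0`. -/
theorem prox_action_critical_point (d : ℕ) (hd : 1 ≤ d) (lam ρ : ℝ) (hlam : 0 < lam)
    (m : EuclideanSpace ℝ (Fin d)) (ρstar : ℝ) (hρstar : 0 < ρstar)
    (hroot : (ρstar - ρ) * (ρstar + lam) ^ 2 = lam / 2 * ‖m‖ ^ 2) :
    -‖(ρstar / (ρstar + lam)) • m‖ ^ 2 / (2 * ρstar ^ 2) + (ρstar - ρ) / lam = 0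
      ∧ (1 / ρstar) • ((ρstar / (ρstar + lam)) • m)
          + (1 / lam) • ((ρstar / (ρstar + lam)) • m - m) = 0 := by
  have hsum : 0 < ρstar + lam := by linarith
  constructor
  · rw [norm_smul]
    rw [Real.norm_eq_abs, abs_of_pos (div_pos hρstar hsum)]
    field_simp
    ring_nf
    ring_nf at hroot
    nlinarith [hroot]
  · rw [smul_sub, smul_smul, smul_smul]
    rw [← sub_smul, ← add_smul]
    have h : 1 / ρstar * (ρstar / (ρstar + lam)) + (1 / lam * (ρstar / (ρstar + lam)) - 1 / lam) = 0 := by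
      field_simp
      ring
    rw [h, zero_smul]
end
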